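/- arXiv:1609.09437 — 8 statements merged into one kernel-verified Lean document; each statement's English description precedes it below -/
import Mathlib

section
/- Let D_min < D* < D_max be real numbers and define q(x) := min(D_max - D*, max(-(D* - D_min), x)). Then for all real x, x·q(x) ≥ min(1, D_max - D*, D* - D_min) · x² / (1 + |x|). -/
theorem stmt_1 (Dmin Dstar Dmax : ℝ) (h1 : Dmin < Dstar) (h2 : Dstar < Dmax)
    (q : ℝ → ℝ) (hq : ∀ x, q x = min (Dmax - Dstar) (max (-(Dstar - Dmin)) x)) :
    ∀ x : ℝ, x * q x ≥ min 1 (min (Dmax - Dstar) (Dstar - Dmin)) * x ^ 2 / (1 + |x|) := by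
  intro x
  rw [hq]
  set a := Dmax - Dstar with ha
  set b := Dstar - Dmin with hb
  have hap : 0 < a := by simp [ha]; linarith
  have hbp : 0 < b := by simp [hb]; linarith
  set c := min 1 (min a b) with hc
  have hc1 : c ≤ 1 := min_le_left _ _
  have hca : c ≤ a := le_trans (min_le_right _ _) (min_le_left _ _)
  have hcb : c ≤ b := le_trans (min_le_right _ _) (min_le_right _ _)
  have hcp : 0 < c := by simp [hc]; exact ⟨hap, hbp⟩
  have hd : 0 < 1 + |x| := by positivity
  rw [ge_iff_le, div_le_iff₀ hd]
  rcases le_or_gt x (-b) with h | h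
  · have hax : max (-b) x = -b := max_eq_left h
    rw [hax, min_eq_right (by linarith)]
    have hxabs : |x| = -x := abs_of_nonpos (by linarith)
    rw [hxabs]
    nlinarith [sq_nonneg x, mul_nonneg hcp.le (sq_nonneg x)]
  · have hax : max (-b) x = x := max_eq_right h.le
    rw [hax]
    rcases le_or_gt x a with h2' | h2'
    · rw [min_eq_right h2']
      have : c * x ^ 2 ≤ x ^ 2 * (1 + |x|) := by
        nlinarith [sq_nonneg x, abs_nonneg x]
      linarith [this]
    · rw [min_eq_left h2'.le]
      have hxabs : |x| = x := abs_of_pos (by linarith)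
      rw [hxabs]
      nlinarith [sq_nonneg x]
end

section
/- Suppose k̃ : [0,A] → ℝ is continuous, nonnegative, with ∫₀^A k̃(a) da = 1, and suppose there exists ε > 0 such that with T := sup{a ∈ [0,A] : k̃(a) > 0} and S_ε := {a ∈ [0,T] : k̃(a) ≤ ε}, the Lebesgue measure satisfies |S_ε| < (2r)⁻¹ where r := (∫₀^A a k̃(a) da)⁻¹. Then for every λ ∈ [0, r⁻¹ε], ∫₀^A |k̃(a) - r·λ·∫_a^A k̃(s) ds| da ≤ 1 - λ(1 - 2r|S_ε|). -/
open MeasureTheory intervalIntegral Set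

/-!
Put `K a = ∫ s in a..A, k̃ s`, `c = r λ ≤ ε` and `f = k̃ - c K`, so that `|f| = f + 2 f⁻`.
Integration by parts gives `∫₀^A K = ∫₀^A a k̃(a) da = r⁻¹`, hence `∫₀^A f = 1 - λ`.
Where `f a < 0` we have `0 < K a ≤ 1`, so `k̃ a < c ≤ ε` and `k̃` is positive somewhere in
`[a, A]`, which puts `a` below `T`; thus `f⁻ ≤ c` on `S_ε` and `f⁻ = 0` off it, and
`∫₀^A f⁻ ≤ c |S_ε|`.
-/

theorem integral_abs_le_of_negPart_le {f g : ℝ → ℝ} {a b : ℝ} (hab : a ≤ b)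
    (hf : IntervalIntegrable f volume a b) (hg : IntervalIntegrable g volume a b)
    (hfg : ∀ x ∈ Icc a b, (f x)⁻ ≤ g x) :
    ∫ x in a..b, |f x| ≤ (∫ x in a..b, f x) + 2 * ∫ x in a..b, g x := by
  have habs : ∀ x ∈ Icc a b, |f x| ≤ f x + 2 * g x := fun x hx => by
    rw [← posPart_add_negPart]
    linarith [posPart_sub_negPart (f x), hfg x hx]
  rw [← intervalIntegral.integral_const_mul, ← integral_add hf (hg.const_mul 2)]
  exact integral_mono_on hab hf.abs (hf.add (hg.const_mul 2)) habs

theorem integral_indicator_const_le {S : Set ℝ} {a b c : ℝ} (hab : a ≤ b) (hc : 0 ≤ c)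
    (hS : MeasurableSet S) (hS_fin : volume S ≠ ⊤) :
    ∫ x in a..b, S.indicator (fun _ => c) x ≤ c * volume.real S := by
  rw [integral_of_le hab, integral_indicator_const c hS, smul_eq_mul, mul_comm,
    measureReal_restrict_apply hS]
  gcongr
  exact inter_subset_left

theorem intervalIntegrable_indicator_const {S : Set ℝ} {a b : ℝ} (c : ℝ) (hS : MeasurableSet S) :
    IntervalIntegrable (S.indicator fun _ => c) volume a b :=
  ⟨(integrableOn_const measure_Ioc_lt_top.ne).indicator hS,
    (integrableOn_const measure_Ioc_lt_top.ne).indicator hS⟩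

theorem integral_tail_eq_integral_sub_mul {k : ℝ → ℝ} {a b : ℝ} (hab : a ≤ b)
    (hk : ContinuousOn k (Icc a b)) :
    ∫ x in a..b, ∫ s in x..b, k s = ∫ x in a..b, (x - a) * k x := by
  have hk' : ContinuousOn k (uIcc a b) := by rwa [uIcc_of_le hab]
  have hderiv : ∀ x ∈ Ioo (min a b) (max a b),
      HasDerivAt (fun x => ∫ s in x..b, k s) (-k x) x := by
    intro x hx
    rw [min_eq_left hab, max_eq_right hab] at hx
    exact integral_hasDerivAt_left
      ((hk.mono (Icc_subset_Icc_left hx.1.le)).intervalIntegrable_of_Icc hx.2.le)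
      ((hk.mono Ioo_subset_Icc_self).stronglyMeasurableAtFilter isOpen_Ioo x hx)
      (hk.continuousAt (Icc_mem_nhds hx.1 hx.2))
  have := integral_mul_deriv_eq_deriv_mul_of_hasDerivAt (u := fun x => x - a) (u' := fun _ => 1)
    (continuousOn_id.sub continuousOn_const)
    (continuousOn_primitive_interval_left (hk'.integrableOn_compact isCompact_uIcc))
    (fun x _ => (hasDerivAt_id x).sub_const a) hderiv intervalIntegrable_const
    hk'.intervalIntegrable.neg
  simp only [integral_same, mul_zero, sub_self, zero_mul, one_mul, intervalIntegral.integral_neg,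
    mul_neg] at this
  linarith

theorem le_sSup_pos_of_integral_pos {k : ℝ → ℝ} {a b x : ℝ} (hx : x ∈ Icc a b)
    (h : 0 < ∫ s in x..b, k s) :
    x ≤ sSup {s ∈ Icc a b | 0 < k s} := by
  obtain ⟨s, hs, hks⟩ : ∃ s ∈ Icc x b, 0 < k s := by
    by_contra! hk
    have := integral_nonneg (μ := volume) hx.2 fun s hs => neg_nonneg.2 (hk s hs)
    rw [intervalIntegral.integral_neg] at this
    linarith
  exact hs.1.trans (le_csSup ⟨b, fun y hy => hy.1.2⟩ ⟨⟨hx.1.trans hs.1, hs.2⟩, hks⟩)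

theorem negPart_sub_mul_integral_le_indicator {k : ℝ → ℝ} {a b c ε x : ℝ}
    (hk0 : ∀ y ∈ Icc a b, 0 ≤ k y) (hmass : ∫ y in a..b, k y = 1) (hc : 0 ≤ c) (hcε : c ≤ ε)
    (hx : x ∈ Icc a b) :
    (k x - c * ∫ s in x..b, k s)⁻ ≤
      {y ∈ Icc a (sSup {s ∈ Icc a b | 0 < k s}) | k y ≤ ε}.indicator (fun _ => c) x := by
  set K := ∫ s in x..b, k s
  rcases le_or_gt (c * K) (k x) with hle | hlt
  · rw [negPart_eq_zero.2 (sub_nonneg.2 hle)]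
    exact indicator_nonneg (fun _ _ => hc) x
  have hK_pos : 0 < K := pos_of_mul_pos_right ((hk0 x hx).trans_lt hlt) hc
  have hK_le : K ≤ 1 := by
    rw [← hmass]
    refine integral_mono_interval hx.1 hx.2 le_rfl ?_
      (intervalIntegrable_of_integral_ne_zero (by simp [hmass]))
    exact (ae_restrict_mem measurableSet_Ioc).mono fun y hy => hk0 y (Ioc_subset_Icc_self hy)
  have hcK : c * K ≤ c := mul_le_of_le_one_right hc hK_le
  have hmem : x ∈ {y ∈ Icc a (sSup {s ∈ Icc a b | 0 < k s}) | k y ≤ ε} :=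
    ⟨⟨hx.1, le_sSup_pos_of_integral_pos hx hK_pos⟩, by linarith⟩
  rw [indicator_of_mem hmem, negPart_eq_neg.2 (by linarith)]
  linarith [hk0 x hx]

theorem stmt_7_general (A ε : ℝ) (hA : 0 < A) (ktil : ℝ → ℝ)
    (hkc : ContinuousOn ktil (Set.Icc 0 A))
    (hk0 : ∀ a ∈ Set.Icc 0 A, 0 ≤ ktil a)
    (hmass : (∫ a in (0:ℝ)..A, ktil a) = 1)
    (r T : ℝ)
    (hr : r = (∫ a in (0:ℝ)..A, a * ktil a)⁻¹)
    (hT : T = sSup {a ∈ Set.Icc (0:ℝ) A | 0 < ktil a})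
    (S : Set ℝ)
    (hS : S = {a ∈ Set.Icc (0:ℝ) T | ktil a ≤ ε})
    (hSmeas : (volume S).toReal < (2 * r)⁻¹) :
    ∀ lam ∈ Set.Icc (0:ℝ) (r⁻¹ * ε),
      (∫ a in (0:ℝ)..A, |ktil a - r * lam * ∫ s in a..A, ktil s|) ≤
        1 - lam * (1 - 2 * r * (volume S).toReal) := by
  rintro lam ⟨hlam0, hlam⟩
  have hr0 : 0 < r := by
    by_contra! hr0
    linarith [inv_nonpos.2 (by linarith : 2 * r ≤ 0), ENNReal.toReal_nonneg (a := volume S)]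
  have hc0 : 0 ≤ r * lam := by positivity
  have hcε : r * lam ≤ ε := (le_inv_mul_iff₀ hr0).1 hlam
  have hkc' : ContinuousOn ktil (uIcc 0 A) := by rwa [uIcc_of_le hA.le]
  have hK : ContinuousOn (fun a => ∫ s in a..A, ktil s) (uIcc 0 A) :=
    continuousOn_primitive_interval_left (hkc'.integrableOn_compact isCompact_uIcc)
  have hf : ContinuousOn (fun a => ktil a - r * lam * ∫ s in a..A, ktil s) (uIcc 0 A) :=
    hkc'.sub (continuousOn_const.mul hK)
  have hmean : ∫ a in (0:ℝ)..A, (ktil a - r * lam * ∫ s in a..A, ktil s) = 1 - lam := by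
    rw [integral_sub hkc'.intervalIntegrable (hK.intervalIntegrable.const_mul _),
      intervalIntegral.integral_const_mul, integral_tail_eq_integral_sub_mul hA.le hkc, hmass]
    have hM : ∫ a in (0:ℝ)..A, a * ktil a = r⁻¹ := by rw [hr, inv_inv]
    simp only [sub_zero, hM]
    field_simp
  have hTA : T ≤ A := hT ▸ Real.sSup_le (fun x hx => hx.1.2) hA.le
  have hS_closed : IsClosed S :=
    hS ▸ isClosed_Icc.isClosed_le (hkc.mono (Icc_subset_Icc_right hTA)) continuousOn_const
  have hS_fin : volume S ≠ ⊤ :=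
    ((measure_mono (hS ▸ sep_subset _ _)).trans_lt measure_Icc_lt_top).ne
  calc ∫ a in (0:ℝ)..A, |ktil a - r * lam * ∫ s in a..A, ktil s|
      ≤ (∫ a in (0:ℝ)..A, (ktil a - r * lam * ∫ s in a..A, ktil s)) +
          2 * ∫ a in (0:ℝ)..A, S.indicator (fun _ => r * lam) a :=
        integral_abs_le_of_negPart_le hA.le hf.intervalIntegrable
          (intervalIntegrable_indicator_const _ hS_closed.measurableSet) fun a ha => by
            subst hS hT; exact negPart_sub_mul_integral_le_indicator hk0 hmass hc0 hcε ha
    _ ≤ (1 - lam) + 2 * (r * lam * volume.real S) := by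
        rw [hmean]
        gcongr
        exact integral_indicator_const_le hA.le hc0 hS_closed.measurableSet hS_fin
    _ = 1 - lam * (1 - 2 * r * (volume S).toReal) := by rw [measureReal_def]; ring

theorem stmt_7 (A ε : ℝ) (hA : 0 < A) (hε : 0 < ε) (ktil : ℝ → ℝ)
    (hkc : ContinuousOn ktil (Set.Icc 0 A))
    (hk0 : ∀ a ∈ Set.Icc 0 A, 0 ≤ ktil a)
    (hmass : (∫ a in (0:ℝ)..A, ktil a) = 1)
    (r T : ℝ)
    (hr : r = (∫ a in (0:ℝ)..A, a * ktil a)⁻¹)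
    (hT : T = sSup {a ∈ Set.Icc (0:ℝ) A | 0 < ktil a})
    (S : Set ℝ)
    (hS : S = {a ∈ Set.Icc (0:ℝ) T | ktil a ≤ ε})
    (hSmeas : (volume S).toReal < (2 * r)⁻¹) :
    ∀ lam ∈ Set.Icc (0:ℝ) (r⁻¹ * ε),
      (∫ a in (0:ℝ)..A, |ktil a - r * lam * ∫ s in a..A, ktil s|) ≤
        1 - lam * (1 - 2 * r * (volume S).toReal) :=
  stmt_7_general A ε hA ktil hkc hk0 hmass r T hr hT S hS hSmeas
end

section
/- Let φ : [0,A] → [0,∞) be continuous with L := ∫₀^A φ(a) da ≥ 1, and let δ ∈ (0,A) satisfy c := ∫₀^δ φ(a) da < 1. Let x ∈ L^∞_loc([-A,∞);ℝ) satisfy x(t) = ∫₀^A φ(a) x(t-a) da for almost every t ≥ 0, with essentially bounded initial data ξ on [-A,0). Then for all t ≥ 0: min(ess inf_{[-A,0)} ξ, ((L-c)/(1-c))^{1+⌈t/h⌉} · ess inf_{[-A,0)} ξ) ≤ ess inf_{a∈[-A,0)} x(t+a) ≤ ess sup_{a∈[-A,0)} x(t+a) ≤ max(((L-c)/(1-c))^{1+⌈t/h⌉}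 · ess sup_{[-A,0)} ξ, ess sup_{[-A,0)} ξ), where h := min(δ, A-δ). -/
/-!
Split the delay integral at `δ`. For `t` in a window `[0, T)` with `T ≤ (n + 1) h`, the part over
`[0, δ]` only sees `x` on `[-A, T)`, so it is at most `c S` where `S` is the essential supremum of
`x` there, while the part over `[δ, A]` only sees `x` on `[-A, n h)` (because `h ≤ δ`), where by
induction `x ≤ K_n := max (r ^ n M) M` with `M = ess sup ξ` and `r = (L - c) / (1 - c) ≥ 1`.
Hence `S ≤ max (c S + (L - c) K_n) M`, and since `c < 1` this gives `S ≤ max (r K_n) M ≤ K_{n+1}`.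
The lower bound is the upper bound for `-x`.
-/

open MeasureTheory intervalIntegral Filter Set

section EssBound

variable {α : Type*} [MeasurableSpace α] {μ : Measure α} {f : α → ℝ} {s : Set α} {K : ℝ}

lemma ae_imp_le_essSup_restrict (hs : MeasurableSet s) (hf : BddAbove (f '' s)) :
    ∀ᵐ a ∂μ, a ∈ s → f a ≤ essSup f (μ.restrict s) :=
  (ae_restrict_iff' hs).1 (ae_le_essSup (hf.isBoundedUnder (self_mem_ae_restrict hs)))

lemma ae_imp_essInf_restrict_le (hs : MeasurableSet s) (hf : BddBelow (f '' s)) :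
    ∀ᵐ a ∂μ, a ∈ s → essInf f (μ.restrict s) ≤ f a :=
  (ae_restrict_iff' hs).1 (ae_essInf_le (hf.isBoundedUnder (self_mem_ae_restrict hs)))

lemma essSup_restrict_le_of_ae (hs : MeasurableSet s) (hμs : μ s ≠ 0) (hf : BddBelow (f '' s))
    (h : ∀ᵐ a ∂μ, a ∈ s → f a ≤ K) : essSup f (μ.restrict s) ≤ K :=
  have : (ae (μ.restrict s)).NeBot := ae_neBot.2 (Measure.restrict_eq_zero.not.2 hμs)
  essSup_le_of_ae_le K ((ae_restrict_iff' hs).2 h)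
    (hf.isBoundedUnder (self_mem_ae_restrict hs)).isCoboundedUnder_le

lemma le_essInf_restrict_of_ae (hs : MeasurableSet s) (hμs : μ s ≠ 0) (hf : BddAbove (f '' s))
    (h : ∀ᵐ a ∂μ, a ∈ s → K ≤ f a) : K ≤ essInf f (μ.restrict s) :=
  have : (ae (μ.restrict s)).NeBot := ae_neBot.2 (Measure.restrict_eq_zero.not.2 hμs)
  le_essInf_of_ae_le K ((ae_restrict_iff' hs).2 h)
    (hf.isBoundedUnder (self_mem_ae_restrict hs)).isCoboundedUnder_ge

lemma essInf_restrict_le_essSup_restrict (hs : MeasurableSet s) (hμs : μ s ≠ 0)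
    (hf : Bornology.IsBounded (f '' s)) : essInf f (μ.restrict s) ≤ essSup f (μ.restrict s) :=
  have : (ae (μ.restrict s)).NeBot := ae_neBot.2 (Measure.restrict_eq_zero.not.2 hμs)
  liminf_le_limsup (hf.bddAbove.isBoundedUnder (self_mem_ae_restrict hs))
    (hf.bddBelow.isBoundedUnder (self_mem_ae_restrict hs))

end EssBound

lemma ae_comp_add_of_ae_Ico {p : ℝ → Prop} {A t T : ℝ} (ht : 0 ≤ t) (htT : t ≤ T)
    (h : ∀ᵐ s, s ∈ Ico (-A) T → p s) : ∀ᵐ a, a ∈ Ico (-A) 0 → p (t + a) :=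
  ((measurePreserving_add_left volume t).quasiMeasurePreserving.ae h).mono
    fun a hp ha => hp ⟨by linarith [ha.1], by linarith [ha.2]⟩

lemma isBounded_image_comp_add_Ico {x : ℝ → ℝ} {A t : ℝ} (ht : 0 ≤ t)
    (hbdd : Bornology.IsBounded (x '' Icc (-A) t)) :
    Bornology.IsBounded ((fun a => x (t + a)) '' Ico (-A) 0) := by
  refine hbdd.subset ?_
  rintro _ ⟨a, ha, rfl⟩
  exact ⟨t + a, ⟨by linarith [ha.1], by linarith [ha.2]⟩, rfl⟩

lemma intervalIntegral_mul_le_of_ae_le {φ g : ℝ → ℝ} {u v K : ℝ} (huv : u ≤ v)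
    (hφ0 : ∀ a ∈ Icc u v, 0 ≤ φ a) (hφ : IntervalIntegrable φ volume u v)
    (hφg : IntervalIntegrable (fun a => φ a * g a) volume u v)
    (hg : ∀ᵐ a, a ∈ Icc u v → g a ≤ K) :
    ∫ a in u..v, φ a * g a ≤ (∫ a in u..v, φ a) * K := by
  rw [← intervalIntegral.integral_mul_const]
  refine integral_mono_ae_restrict huv hφg (hφ.mul_const K) ?_
  filter_upwards [ae_restrict_mem measurableSet_Icc, ae_restrict_of_ae hg] with a ha hga
  exact mul_le_mul_of_nonneg_left (hga ha) (hφ0 a ha)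

lemma intervalIntegrable_mul_comp_sub {φ x : ℝ → ℝ} {A t : ℝ} (hA : 0 ≤ A)
    (hφ : ContinuousOn φ (Icc 0 A)) (hx : Measurable x)
    (hbdd : Bornology.IsBounded (x '' Icc (t - A) t)) :
    IntervalIntegrable (fun a => φ a * x (t - a)) volume 0 A := by
  obtain ⟨C, hC⟩ := isBounded_iff_forall_norm_le.1 hbdd
  refine (intervalIntegrable_iff_integrableOn_Icc_of_le hA).2 <|
    hφ.integrableOn_Icc.mul_bdd (c := C)
      (hx.comp (measurable_const.sub measurable_id)).aestronglyMeasurable ?_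
  filter_upwards [ae_restrict_mem measurableSet_Icc] with a ha
  exact hC _ ⟨t - a, ⟨by linarith [ha.2], by linarith [ha.1]⟩, rfl⟩

lemma le_max_div_mul_of_le_max_mul_add {S K M c d : ℝ} (hc : c < 1)
    (h : S ≤ max (c * S + d * K) M) : S ≤ max (d / (1 - c) * K) M := by
  rcases le_max_iff.1 h with h | h
  · refine le_max_of_le_left ?_
    rw [div_mul_eq_mul_div, le_div_iff₀ (sub_pos.2 hc)]
    linarith
  · exact le_max_of_le_right h

lemma max_mul_max_pow_mul_le {r M : ℝ} (hr : 1 ≤ r) (n : ℕ) :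
    max (r * max (r ^ n * M) M) M ≤ max (r ^ (n + 1) * M) M := by
  have hrn : 1 ≤ r ^ n := one_le_pow₀ hr
  rw [mul_max_of_nonneg _ _ (by linarith), pow_succ', mul_assoc]
  refine max_le (max_le (le_max_left _ _) ?_) (le_max_right _ _)
  rcases le_total 0 M with hM | hM
  · exact le_max_of_le_left (mul_le_mul_of_nonneg_left (by nlinarith) (by linarith))
  · exact le_max_of_le_right (by nlinarith)

section RenewalEquation

variable {A δ L c : ℝ} {φ x : ℝ → ℝ}

lemma ae_le_mul_add_mul_of_ae_le (hφc : ContinuousOn φ (Icc 0 A))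
    (hφ0 : ∀ a ∈ Icc 0 A, 0 ≤ φ a) (hδ : 0 < δ) (hδA : δ < A)
    (hL : L = ∫ a in 0..A, φ a) (hc : c = ∫ a in 0..δ, φ a) (hmeas : Measurable x)
    (hIDE : ∀ᵐ t : ℝ, 0 ≤ t → x t = ∫ a in 0..A, φ a * x (t - a))
    {T S K : ℝ} (hbdd : Bornology.IsBounded (x '' Ico (-A) T))
    (hS : ∀ᵐ s, s ∈ Ico (-A) T → x s ≤ S) (hK : ∀ᵐ s, s ∈ Ico (-A) (T - δ) → x s ≤ K) :
    ∀ᵐ t, t ∈ Ico 0 T → x t ≤ c * S + (L - c) * K := by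
  have hδ_mem : δ ∈ uIcc 0 A := mem_uIcc_of_le hδ.le hδA.le
  have hφ : IntervalIntegrable φ volume 0 A := hφc.intervalIntegrable_of_Icc (hδ.trans hδA).le
  have hφ₁ : IntervalIntegrable φ volume 0 δ := hφ.mono_set (uIcc_subset_uIcc_left hδ_mem)
  have hφ₂ : IntervalIntegrable φ volume δ A := hφ.mono_set (uIcc_subset_uIcc_right hδ_mem)
  have hLc : L - c = ∫ a in δ..A, φ a := by rw [hL, hc, integral_interval_sub_left hφ hφ₁]
  filter_upwards [hIDE] with t hxt ⟨ht0, htT⟩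
  have hshift := (Measure.measurePreserving_sub_left volume t).quasiMeasurePreserving
  have hint : IntervalIntegrable (fun a => φ a * x (t - a)) volume 0 A :=
    intervalIntegrable_mul_comp_sub (hδ.trans hδA).le hφc hmeas
      (hbdd.subset (image_mono fun s hs => ⟨by linarith [hs.1], hs.2.trans_lt htT⟩))
  have hint₁ := hint.mono_set (uIcc_subset_uIcc_left hδ_mem)
  have hint₂ := hint.mono_set (uIcc_subset_uIcc_right hδ_mem)
  rw [hxt ht0, ← integral_add_adjacent_intervals hint₁ hint₂, hLc, hc]
  gcongr
  · refine intervalIntegral_mul_le_of_ae_le hδ.le (fun a ha => hφ0 a ⟨ha.1, ha.2.trans hδA.le⟩)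
      hφ₁ hint₁ ((hshift.ae hS).mono fun a hxa ha => ?_)
    exact hxa ⟨by linarith [ha.2], by linarith [ha.1]⟩
  · refine intervalIntegral_mul_le_of_ae_le hδA.le (fun a ha => hφ0 a ⟨hδ.le.trans ha.1, ha.2⟩)
      hφ₂ hint₂ ((hshift.ae hK).mono fun a hxa ha => ?_)
    exact hxa ⟨by linarith [ha.2], by linarith [ha.1]⟩

theorem ae_le_max_pow_mul_of_ae_le_on_Ico (hφc : ContinuousOn φ (Icc 0 A))
    (hφ0 : ∀ a ∈ Icc 0 A, 0 ≤ φ a) (hδ : 0 < δ) (hδA : δ < A)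
    (hL : L = ∫ a in 0..A, φ a) (hL1 : 1 ≤ L) (hc : c = ∫ a in 0..δ, φ a) (hc1 : c < 1)
    (hmeas : Measurable x) (hloc : ∀ b : ℝ, -A ≤ b → Bornology.IsBounded (x '' Icc (-A) b))
    (hIDE : ∀ᵐ t : ℝ, 0 ≤ t → x t = ∫ a in 0..A, φ a * x (t - a))
    {h M : ℝ} (hh : 0 < h) (hhδ : h ≤ δ) (hM : ∀ᵐ s, s ∈ Ico (-A) 0 → x s ≤ M) (n : ℕ) :
    ∀ᵐ s, s ∈ Ico (-A) (n * h) → x s ≤ max (((L - c) / (1 - c)) ^ n * M) M := by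
  induction n with
  | zero => simpa using hM
  | succ n ih =>
    set T : ℝ := ((n + 1 : ℕ) : ℝ) * h
    have hT : T - δ ≤ n * h := by push_cast [T]; linarith
    have hT0 : 0 ≤ T := by positivity
    have hA : 0 < A := hδ.trans hδA
    have hbdd : Bornology.IsBounded (x '' Ico (-A) T) :=
      (hloc T (by linarith)).subset (image_mono Ico_subset_Icc_self)
    have hvol : volume (Ico (-A) T) ≠ 0 := by simp; linarith
    set S := essSup x (volume.restrict (Ico (-A) T))
    have hS := ae_imp_le_essSup_restrict (μ := volume) measurableSet_Ico hbdd.bddAbove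
    have hK : ∀ᵐ s, s ∈ Ico (-A) (T - δ) → x s ≤ max (((L - c) / (1 - c)) ^ n * M) M :=
      ih.mono fun s hs hmem => hs ⟨hmem.1, hmem.2.trans_le hT⟩
    have hstep := ae_le_mul_add_mul_of_ae_le hφc hφ0 hδ hδA hL hc hmeas hIDE hbdd hS hK
    have hS_le : S ≤ max (c * S + (L - c) * max (((L - c) / (1 - c)) ^ n * M) M) M := by
      refine essSup_restrict_le_of_ae measurableSet_Ico hvol hbdd.bddBelow ?_
      filter_upwards [hstep, hM] with s hs_step hs_init ⟨hsA, hsT⟩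
      rcases lt_or_ge s 0 with hs0 | hs0
      · exact le_max_of_le_right (hs_init ⟨hsA, hs0⟩)
      · exact le_max_of_le_left (hs_step ⟨hs0, hsT⟩)
    have hr : 1 ≤ (L - c) / (1 - c) := (one_le_div (sub_pos.2 hc1)).2 (by linarith)
    have hS_le' := (le_max_div_mul_of_le_max_mul_add hc1 hS_le).trans
      (max_mul_max_pow_mul_le hr n)
    exact hS.mono fun s hs hmem => (hs hmem).trans hS_le'

end RenewalEquation

theorem stmt_8_general (A δ : ℝ) (φ x ξ : ℝ → ℝ)
    (hφc : ContinuousOn φ (Set.Icc 0 A)) (hφ0 : ∀ a ∈ Set.Icc 0 A, 0 ≤ φ a)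
    (L c h : ℝ)
    (hL : L = ∫ a in (0:ℝ)..A, φ a) (hL1 : 1 ≤ L)
    (hδ : 0 < δ) (hδA : δ < A)
    (hc : c = ∫ a in (0:ℝ)..δ, φ a) (hc1 : c < 1)
    (hh : h = min δ (A - δ))
    (hmeas : Measurable x)
    (hloc : ∀ b : ℝ, -A ≤ b → Bornology.IsBounded (x '' Set.Icc (-A) b))
    (hξbdd : Bornology.IsBounded (ξ '' Set.Ico (-A) 0))
    (hinit : ∀ a ∈ Set.Ico (-A) (0:ℝ), x a = ξ a)
    (hIDE : ∀ᵐ t : ℝ, 0 ≤ t → x t = ∫ a in (0:ℝ)..A, φ a * x (t - a)) :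
    ∀ t ≥ 0,
      min (essInf (fun a => ξ a) (volume.restrict (Set.Ico (-A) (0:ℝ))))
          (((L - c) / (1 - c)) ^ (1 + ⌈t / h⌉₊) *
            essInf (fun a => ξ a) (volume.restrict (Set.Ico (-A) (0:ℝ)))) ≤
        essInf (fun a => x (t + a)) (volume.restrict (Set.Ico (-A) (0:ℝ))) ∧
      essInf (fun a => x (t + a)) (volume.restrict (Set.Ico (-A) (0:ℝ))) ≤
        essSup (fun a => x (t + a)) (volume.restrict (Set.Ico (-A) (0:ℝ))) ∧
      essSup (fun a => x (t + a)) (volume.restrict (Set.Ico (-A) (0:ℝ))) ≤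
        max (((L - c) / (1 - c)) ^ (1 + ⌈t / h⌉₊) *
              essSup (fun a => ξ a) (volume.restrict (Set.Ico (-A) (0:ℝ))))
            (essSup (fun a => ξ a) (volume.restrict (Set.Ico (-A) (0:ℝ)))) := by
  intro t ht
  have hh0 : 0 < h := hh ▸ lt_min hδ (sub_pos.2 hδA)
  have htn : t ≤ ((1 + ⌈t / h⌉₊ : ℕ) : ℝ) * h := by
    have := (div_le_iff₀ hh0).1 (Nat.le_ceil (t / h))
    push_cast; nlinarith
  have hvol : volume (Ico (-A) 0) ≠ 0 := by simp; linarith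
  have hwin := isBounded_image_comp_add_Ico ht (hloc t (by linarith))
  have hM : ∀ᵐ s, s ∈ Ico (-A) 0 → x s ≤ essSup ξ (volume.restrict (Ico (-A) 0)) :=
    (ae_imp_le_essSup_restrict measurableSet_Ico hξbdd.bddAbove).mono
      fun s hs hmem => hinit s hmem ▸ hs hmem
  have hm : ∀ᵐ s, s ∈ Ico (-A) 0 → -x s ≤ -essInf ξ (volume.restrict (Ico (-A) 0)) :=
    (ae_imp_essInf_restrict_le measurableSet_Ico hξbdd.bddBelow).mono
      fun s hs hmem => neg_le_neg (hinit s hmem ▸ hs hmem)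
  have hhδ : h ≤ δ := hh ▸ min_le_left _ _
  have upper := ae_le_max_pow_mul_of_ae_le_on_Ico hφc hφ0 hδ hδA hL hL1 hc hc1 hmeas hloc hIDE
    hh0 hhδ hM (1 + ⌈t / h⌉₊)
  have hIDE_neg : ∀ᵐ t : ℝ, 0 ≤ t → -x t = ∫ a in 0..A, φ a * -x (t - a) :=
    hIDE.mono fun t ht ht0 => by simp only [mul_neg, intervalIntegral.integral_neg, ht ht0]
  have lower := ae_le_max_pow_mul_of_ae_le_on_Ico (x := fun s => -x s) hφc hφ0 hδ hδA hL hL1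
    hc hc1 hmeas.neg
    (fun b hb => by simpa only [← image_neg_eq_neg, image_image] using (hloc b hb).neg)
    hIDE_neg hh0 hhδ hm (1 + ⌈t / h⌉₊)
  refine ⟨le_essInf_restrict_of_ae measurableSet_Ico hvol hwin.bddAbove ?_,
    essInf_restrict_le_essSup_restrict measurableSet_Ico hvol hwin,
    essSup_restrict_le_of_ae measurableSet_Ico hvol hwin.bddBelow
      (ae_comp_add_of_ae_Ico ht htn upper)⟩
  refine (ae_comp_add_of_ae_Ico ht htn lower).mono fun a ha hmem => ?_
  rw [min_comm, ← neg_le_neg_iff, ← max_neg_neg, ← mul_neg]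
  exact ha hmem

theorem stmt_8 (A δ : ℝ) (hA : 0 < A) (φ x ξ : ℝ → ℝ)
    (hφc : ContinuousOn φ (Set.Icc 0 A)) (hφ0 : ∀ a ∈ Set.Icc 0 A, 0 ≤ φ a)
    (L c h : ℝ)
    (hL : L = ∫ a in (0:ℝ)..A, φ a) (hL1 : 1 ≤ L)
    (hδ : 0 < δ) (hδA : δ < A)
    (hc : c = ∫ a in (0:ℝ)..δ, φ a) (hc1 : c < 1)
    (hh : h = min δ (A - δ))
    (hmeas : Measurable x)
    (hloc : ∀ b : ℝ, -A ≤ b → Bornology.IsBounded (x '' Set.Icc (-A) b))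
    (hξbdd : Bornology.IsBounded (ξ '' Set.Ico (-A) 0))
    (hinit : ∀ a ∈ Set.Ico (-A) (0:ℝ), x a = ξ a)
    (hIDE : ∀ᵐ t : ℝ, 0 ≤ t → x t = ∫ a in (0:ℝ)..A, φ a * x (t - a)) :
    ∀ t ≥ 0,
      min (essInf (fun a => ξ a) (volume.restrict (Set.Ico (-A) (0:ℝ))))
          (((L - c) / (1 - c)) ^ (1 + ⌈t / h⌉₊) *
            essInf (fun a => ξ a) (volume.restrict (Set.Ico (-A) (0:ℝ)))) ≤
        essInf (fun a => x (t + a)) (volume.restrict (Set.Ico (-A) (0:ℝ))) ∧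
      essInf (fun a => x (t + a)) (volume.restrict (Set.Ico (-A) (0:ℝ))) ≤
        essSup (fun a => x (t + a)) (volume.restrict (Set.Ico (-A) (0:ℝ))) ∧
      essSup (fun a => x (t + a)) (volume.restrict (Set.Ico (-A) (0:ℝ))) ≤
        max (((L - c) / (1 - c)) ^ (1 + ⌈t / h⌉₊) *
              essSup (fun a => ξ a) (volume.restrict (Set.Ico (-A) (0:ℝ))))
            (essSup (fun a => ξ a) (volume.restrict (Set.Ico (-A) (0:ℝ)))) :=
  stmt_8_general A δ φ x ξ hφc hφ0 L c h hL hL1 hδ hδA hc hc1 hh hmeas hloc hξbdd hinit hIDE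
end

section
/- Let φ : [0,A] → [0,∞) be continuous with ∫₀^A φ(a) da = 1, and let x : [-A,∞) → ℝ be a continuous solution of x(t) = ∫₀^A φ(a) x(t-a) da for t ≥ 0. Then the function t ↦ min_{a∈[0,A]} x(t-a) is non-decreasing and the function t ↦ max_{a∈[0,A]} x(t-a) is non-increasing on [0,∞). In particular, for all t ≥ 0, min_{a∈[0,A]} x(-a) ≤ min_{a∈[0,A]} x(t-a) ≤ max_{a∈[0,A]} x(t-a) ≤ max_{a∈[0,A]} x(-a). -/
open MeasureTheory intervalIntegral

lemma winf_aux (x : ℝ → ℝ) (hxc : Continuous x) {A : ℝ} (hA : 0 ≤ A) (t : ℝ) :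
    ∃ a₀ : Set.Icc (0:ℝ) A, (⨅ a : Set.Icc (0:ℝ) A, x (t - a)) = x (t - a₀) ∧
      ∀ a : Set.Icc (0:ℝ) A, x (t - a₀) ≤ x (t - a) := by
  haveI : Nonempty (Set.Icc (0:ℝ) A) := ⟨⟨0, le_refl 0, hA⟩⟩
  obtain ⟨a₀, ha₀, hmin'⟩ := isCompact_Icc.exists_isMinOn ⟨0, le_refl 0, hA⟩
    ((hxc.comp (continuous_const.sub continuous_id)).continuousOn (s := Set.Icc 0 A))
  have hmin : ∀ a ∈ Set.Icc (0:ℝ) A, x (t - a₀) ≤ x (t - a) := fun a ha => hmin' ha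
  have hbdd : BddBelow (Set.range fun a : Set.Icc (0:ℝ) A => x (t - a)) :=
    ⟨x (t - a₀), by rintro y ⟨a, rfl⟩; exact hmin a a.2⟩
  exact ⟨⟨a₀, ha₀⟩, le_antisymm (ciInf_le hbdd ⟨a₀, ha₀⟩) (le_ciInf fun a => hmin a a.2),
    fun a => hmin a a.2⟩

lemma wsup_aux (x : ℝ → ℝ) (hxc : Continuous x) {A : ℝ} (hA : 0 ≤ A) (t : ℝ) :
    ∃ a₀ : Set.Icc (0:ℝ) A, (⨆ a : Set.Icc (0:ℝ) A, x (t - a)) = x (t - a₀) ∧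
      ∀ a : Set.Icc (0:ℝ) A, x (t - a) ≤ x (t - a₀) := by
  haveI : Nonempty (Set.Icc (0:ℝ) A) := ⟨⟨0, le_refl 0, hA⟩⟩
  obtain ⟨a₀, ha₀, hmax'⟩ := isCompact_Icc.exists_isMaxOn ⟨0, le_refl 0, hA⟩
    ((hxc.comp (continuous_const.sub continuous_id)).continuousOn (s := Set.Icc 0 A))
  have hmax : ∀ a ∈ Set.Icc (0:ℝ) A, x (t - a) ≤ x (t - a₀) := fun a ha => hmax' ha
  have hbdd : BddAbove (Set.range fun a : Set.Icc (0:ℝ) A => x (t - a)) :=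
    ⟨x (t - a₀), by rintro y ⟨a, rfl⟩; exact hmax a a.2⟩
  exact ⟨⟨a₀, ha₀⟩, le_antisymm (ciSup_le fun a => hmax a a.2) (le_ciSup hbdd ⟨a₀, ha₀⟩),
    fun a => hmax a a.2⟩

lemma key_min (A : ℝ) (hA : 0 < A) (φ x : ℝ → ℝ)
    (hφc : ContinuousOn φ (Set.Icc 0 A)) (hφ0 : ∀ a ∈ Set.Icc 0 A, 0 ≤ φ a)
    (hmass : (∫ a in (0:ℝ)..A, φ a) = 1)
    (hxc : Continuous x)
    (hIDE : ∀ t ≥ 0, x t = ∫ a in (0:ℝ)..A, φ a * x (t - a)) :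
    ∀ t, -A ≤ t → (⨅ a : Set.Icc (0:ℝ) A, x (0 - a)) ≤ x t := by
  have hA' : (0:ℝ) ≤ A := hA.le
  obtain ⟨a₀, hinf, hmin⟩ := winf_aux x hxc hA' 0
  rw [hinf]
  obtain ⟨m, hmeq⟩ : ∃ m : ℝ, x (0 - ↑a₀) = m := ⟨_, rfl⟩
  rw [hmeq]
  have hm_le : ∀ s, -A ≤ s → s ≤ 0 → m ≤ x s := by
    intro s hs1 hs2
    have h := hmin ⟨-s, by constructor <;> linarith⟩
    rw [hmeq] at h
    simpa using h
  clear hmeq hinf hmin a₀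
  suffices h : ∀ ε > 0, ∀ t, -A ≤ t → m - ε ≤ x t by
    intro t ht
    by_contra hcon
    push_neg at hcon
    have := h ((m - x t)/2) (by linarith) t ht
    linarith
  intro ε hε
  by_contra hcon
  push_neg at hcon
  obtain ⟨ts, htsA, hts⟩ := hcon
  set B := {t : ℝ | 0 ≤ t ∧ x t ≤ m - ε} with hB
  have hts0 : 0 ≤ ts := by
    by_contra hc
    push_neg at hc
    have := hm_le ts htsA hc.le
    linarith
  have hBne : B.Nonempty := ⟨ts, hts0, hts.le⟩
  have hBclosed : IsClosed B := by
    have : B = {t : ℝ | 0 ≤ t} ∩ {t : ℝ | x t ≤ m - ε} := rfl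
    rw [this]
    exact (isClosed_le continuous_const continuous_id).inter
      (isClosed_le hxc continuous_const)
  have hBbdd : BddBelow B := ⟨0, fun t ht => ht.1⟩
  set t₀ := sInf B with ht₀
  have ht₀B : t₀ ∈ B := hBclosed.csInf_mem hBne hBbdd
  have ht₀0 : 0 ≤ t₀ := ht₀B.1
  have h1 : ∀ a ∈ Set.Ioc (0:ℝ) A, m - ε < x (t₀ - a) := by
    intro a ha
    rcases lt_or_ge (t₀ - a) 0 with hneg | hpos
    · have := hm_le (t₀ - a) (by linarith [ha.2]) hneg.le
      linarith
    · by_contra hc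
      push_neg at hc
      have hmem : t₀ - a ∈ B := ⟨hpos, hc⟩
      have := csInf_le hBbdd hmem
      rw [← ht₀] at this
      linarith [ha.1]
  have hxint : x t₀ = ∫ a in (0:ℝ)..A, φ a * x (t₀ - a) := hIDE t₀ ht₀0
  set c := m - ε with hc
  set g : ℝ → ℝ := fun a => φ a * (x (t₀ - a) - c) with hg
  have hxcc : Continuous fun a : ℝ => x (t₀ - a) :=
    hxc.comp (continuous_const.sub continuous_id)
  have hgc : ContinuousOn g (Set.Icc 0 A) :=
    hφc.mul (hxcc.continuousOn.sub continuousOn_const)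
  have hgnn : ∀ a ∈ Set.Ioc (0:ℝ) A, 0 ≤ g a := fun a ha =>
    mul_nonneg (hφ0 a (Set.Ioc_subset_Icc_self ha)) (by linarith [h1 a ha])
  have hφpos : ∃ a ∈ Set.Ioc (0:ℝ) A, 0 < φ a := by
    by_contra hcp
    push_neg at hcp
    have hz : (∫ a in (0:ℝ)..A, φ a) = 0 := by
      rw [intervalIntegral.integral_of_le hA']
      have : ∀ a ∈ Set.Ioc (0:ℝ) A, φ a = 0 := fun a ha =>
        le_antisymm (hcp a ha) (hφ0 a (Set.Ioc_subset_Icc_self ha))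
      rw [MeasureTheory.setIntegral_congr_fun measurableSet_Ioc this]
      simp
    rw [hz] at hmass
    norm_num at hmass
  obtain ⟨a₁, ha₁, hφa₁⟩ := hφpos
  have hgpos : 0 < ∫ a in (0:ℝ)..A, g a :=
    intervalIntegral.integral_pos hA hgc hgnn
      ⟨a₁, Set.Ioc_subset_Icc_self ha₁, mul_pos hφa₁ (by linarith [h1 a₁ ha₁])⟩
  have hi1 : IntervalIntegrable (fun a => φ a * x (t₀ - a)) volume 0 A :=
    (hφc.mul hxcc.continuousOn).intervalIntegrable_of_Icc hA'
  have hi2 : IntervalIntegrable (fun a => φ a * c) volume 0 A :=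
    (hφc.mul continuousOn_const).intervalIntegrable_of_Icc hA'
  have hgeq : (∫ a in (0:ℝ)..A, g a) = x t₀ - c := by
    have heq : g = fun a => φ a * x (t₀ - a) - φ a * c := funext fun a => by
      simp only [hg]; ring
    rw [heq, intervalIntegral.integral_sub hi1 hi2, ← hxint,
      intervalIntegral.integral_mul_const, hmass, one_mul]
  have hle : x t₀ ≤ c := ht₀B.2
  rw [hgeq] at hgpos
  linarith

lemma key_min_shift (A : ℝ) (hA : 0 < A) (φ x : ℝ → ℝ)
    (hφc : ContinuousOn φ (Set.Icc 0 A)) (hφ0 : ∀ a ∈ Set.Icc 0 A, 0 ≤ φ a)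
    (hmass : (∫ a in (0:ℝ)..A, φ a) = 1)
    (hxc : Continuous x)
    (hIDE : ∀ t ≥ 0, x t = ∫ a in (0:ℝ)..A, φ a * x (t - a)) :
    ∀ t₁ t₂ : ℝ, 0 ≤ t₁ → t₁ ≤ t₂ →
      (⨅ a : Set.Icc (0:ℝ) A, x (t₁ - a)) ≤ ⨅ a : Set.Icc (0:ℝ) A, x (t₂ - a) := by
  intro t₁ t₂ ht₁ ht₁₂
  haveI : Nonempty (Set.Icc (0:ℝ) A) := ⟨⟨0, le_refl 0, hA.le⟩⟩
  set y : ℝ → ℝ := fun s => x (s + t₁) with hy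
  have hyc : Continuous y := hxc.comp (continuous_id.add continuous_const)
  have hyIDE : ∀ s ≥ 0, y s = ∫ a in (0:ℝ)..A, φ a * y (s - a) := by
    intro s hs
    have := hIDE (s + t₁) (by linarith)
    simpa [hy, sub_add_eq_add_sub] using this
  have hkey := key_min A hA φ y hφc hφ0 hmass hyc hyIDE
  have hcong : (⨅ a : Set.Icc (0:ℝ) A, y (0 - a)) = ⨅ a : Set.Icc (0:ℝ) A, x (t₁ - a) := by
    congr 1
    funext a
    simp only [hy]
    ring_nf
  obtain ⟨b₀, hinf₁, hmin₁⟩ := winf_aux x hxc hA.le t₁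
  apply le_ciInf
  intro a
  have hs : -A ≤ t₂ - ↑a - t₁ := by
    have h1 := a.2.2
    have h2 := a.2.1
    simp only [Set.mem_Icc] at *
    linarith
  have := hkey (t₂ - ↑a - t₁) hs
  rw [hcong] at this
  simpa [hy, sub_add_cancel] using this

theorem stmt_9 (A : ℝ) (hA : 0 < A) (φ x : ℝ → ℝ)
    (hφc : ContinuousOn φ (Set.Icc 0 A)) (hφ0 : ∀ a ∈ Set.Icc 0 A, 0 ≤ φ a)
    (hmass : (∫ a in (0:ℝ)..A, φ a) = 1)
    (hxc : Continuous x)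
    (hIDE : ∀ t ≥ 0, x t = ∫ a in (0:ℝ)..A, φ a * x (t - a)) :
    (∀ t₁ t₂ : ℝ, 0 ≤ t₁ → t₁ ≤ t₂ →
      (⨅ a : Set.Icc (0:ℝ) A, x (t₁ - a)) ≤ ⨅ a : Set.Icc (0:ℝ) A, x (t₂ - a)) ∧
    (∀ t₁ t₂ : ℝ, 0 ≤ t₁ → t₁ ≤ t₂ →
      (⨆ a : Set.Icc (0:ℝ) A, x (t₂ - a)) ≤ ⨆ a : Set.Icc (0:ℝ) A, x (t₁ - a)) ∧
    (∀ t ≥ 0,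
      (⨅ a : Set.Icc (0:ℝ) A, x (0 - a)) ≤ (⨅ a : Set.Icc (0:ℝ) A, x (t - a)) ∧
      (⨅ a : Set.Icc (0:ℝ) A, x (t - a)) ≤ (⨆ a : Set.Icc (0:ℝ) A, x (t - a)) ∧
      (⨆ a : Set.Icc (0:ℝ) A, x (t - a)) ≤ ⨆ a : Set.Icc (0:ℝ) A, x (0 - a)) := by
  haveI : Nonempty (Set.Icc (0:ℝ) A) := ⟨⟨0, le_refl 0, hA.le⟩⟩
  have hmin := key_min_shift A hA φ x hφc hφ0 hmass hxc hIDE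
  -- sup statement via -x
  have hnxc : Continuous fun t => -x t := hxc.neg
  have hnIDE : ∀ t ≥ 0, (fun t => -x t) t = ∫ a in (0:ℝ)..A, φ a * (fun t => -x t) (t - a) := by
    intro t ht
    have := hIDE t ht
    simp only [mul_neg, intervalIntegral.integral_neg]
    rw [← this]
  have hmax' := key_min_shift A hA φ (fun t => -x t) hφc hφ0 hmass hnxc hnIDE
  have hneg : ∀ t : ℝ, (⨅ a : Set.Icc (0:ℝ) A, -x (t - a)) = -⨆ a : Set.Icc (0:ℝ) A, x (t - a) := by
    intro t
    obtain ⟨a₀, hsup, hmax⟩ := wsup_aux x hxc hA.le t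
    have hbdd : BddBelow (Set.range fun a : Set.Icc (0:ℝ) A => -x (t - a)) :=
      ⟨-x (t - a₀), by rintro yy ⟨a, rfl⟩; exact neg_le_neg (hmax a)⟩
    have : (⨅ a : Set.Icc (0:ℝ) A, -x (t - a)) = -x (t - a₀) :=
      le_antisymm (ciInf_le hbdd a₀) (le_ciInf fun a => neg_le_neg (hmax a))
    rw [this, hsup]
  have hmax : ∀ t₁ t₂ : ℝ, 0 ≤ t₁ → t₁ ≤ t₂ →
      (⨆ a : Set.Icc (0:ℝ) A, x (t₂ - a)) ≤ ⨆ a : Set.Icc (0:ℝ) A, x (t₁ - a) := by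
    intro t₁ t₂ ht₁ ht₁₂
    have := hmax' t₁ t₂ ht₁ ht₁₂
    rw [hneg t₁, hneg t₂] at this
    linarith
  refine ⟨hmin, hmax, fun t ht => ⟨hmin 0 t le_rfl ht, ?_, hmax 0 t le_rfl ht⟩⟩
  obtain ⟨a₀, hinf, hmn⟩ := winf_aux x hxc hA.le t
  obtain ⟨a₁, hsup, hmx⟩ := wsup_aux x hxc hA.le t
  rw [hinf, hsup]
  exact le_trans (hmn a₁) (hmx a₁)
end

section
/- Let φ : [0,A] → [0,∞) be continuous with ∫₀^A φ(a) da = 1 and set r := (∫₀^A a φ(a) da)⁻¹. Define P(x_t) := r ∫₀^A x(t-a) (∫_a^A φ(s) ds) da for a continuous solution x : [-A,∞) → ℝ of x(t) = ∫₀^A φ(a) x(t-a) da. Then t ↦ P(x_t) is constant: P(x_t) = P(x_0) for all t ≥ 0. -/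
open MeasureTheory intervalIntegral

theorem stmt_11 (A : ℝ) (hA : 0 < A) (φ x : ℝ → ℝ)
    (hφc : ContinuousOn φ (Set.Icc 0 A)) (hφ0 : ∀ a ∈ Set.Icc 0 A, 0 ≤ φ a)
    (hmass : (∫ a in (0:ℝ)..A, φ a) = 1)
    (r : ℝ) (hr : r = (∫ a in (0:ℝ)..A, a * φ a)⁻¹)
    (hxc : Continuous x)
    (hIDE : ∀ t ≥ 0, x t = ∫ a in (0:ℝ)..A, φ a * x (t - a))
    (P : ℝ → ℝ)
    (hP : ∀ t, P t = r * ∫ a in (0:ℝ)..A, x (t - a) * ∫ s in a..A, φ s) :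
    ∀ t ≥ 0, P t = P 0 := by
  -- `g` : continuous extension of `φ` beyond `[0, A]` by clamping
  set g : ℝ → ℝ := fun y => φ (max 0 (min y A)) with hgdef
  have hcmem : ∀ y : ℝ, max 0 (min y A) ∈ Set.Icc 0 A := fun y =>
    ⟨le_max_left _ _, max_le hA.le (min_le_right _ _)⟩
  have hgc : Continuous g := by
    apply hφc.comp_continuous _ hcmem
    exact continuous_const.max (continuous_id.min continuous_const)
  have hgeq : ∀ a ∈ Set.Icc 0 A, g a = φ a := by
    intro a ha
    simp only [hgdef, min_eq_left ha.2, max_eq_right ha.1]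
  have hgint : ∀ a b : ℝ, IntervalIntegrable g volume a b :=
    fun a b => hgc.intervalIntegrable a b
  have hxint : ∀ a b : ℝ, IntervalIntegrable x volume a b :=
    fun a b => hxc.intervalIntegrable a b
  -- transferred mass and IDE hypotheses
  have hmass' : (∫ a in (0:ℝ)..A, g a) = 1 := by
    rw [← hmass]
    apply integral_congr
    intro a ha
    exact hgeq a (by rwa [Set.uIcc_of_le hA.le] at ha)
  have hIDE' : ∀ t ≥ 0, x t = ∫ a in (0:ℝ)..A, g a * x (t - a) := by
    intro t ht
    rw [hIDE t ht]
    apply integral_congr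
    intro a ha
    beta_reduce
    rw [hgeq a (by rwa [Set.uIcc_of_le hA.le] at ha)]
  -- antiderivatives
  set X : ℝ → ℝ := fun u => ∫ w in (0:ℝ)..u, x w with hXdef
  set G : ℝ → ℝ := fun u => ∫ s in (0:ℝ)..u, g s with hGdef
  have hX : ∀ u : ℝ, HasDerivAt X (x u) u :=
    fun u => (hxc.integral_hasStrictDerivAt 0 u).hasDerivAt
  have hG : ∀ u : ℝ, HasDerivAt G (g u) u :=
    fun u => (hgc.integral_hasStrictDerivAt 0 u).hasDerivAt
  have hXc : Continuous X := by
    rw [continuous_iff_continuousAt]; exact fun u => (hX u).continuousAt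
  have hGc : Continuous G := by
    rw [continuous_iff_continuousAt]; exact fun u => (hG u).continuousAt
  have hX0 : X 0 = 0 := integral_same
  have hG0 : G 0 = 0 := integral_same
  -- shift identity : ∫_0^s x(t-b) db = X t - X (t-s)
  have hshift : ∀ t s : ℝ, (∫ b in (0:ℝ)..s, x (t - b)) = X t - X (t - s) := by
    intro t s
    rw [intervalIntegral.integral_comp_sub_left x t, sub_zero,
      ← intervalIntegral.integral_interval_sub_left (hxint 0 t) (hxint 0 (t - s))]
  -- derivative of a ↦ X t - X (t - a)
  have hu' : ∀ t a : ℝ, HasDerivAt (fun a => X t - X (t - a)) (x (t - a)) a := by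
    intro t a
    have h2 : HasDerivAt (fun a : ℝ => t - a) (-1) a := by
      simpa using (hasDerivAt_id a).const_sub t
    have h3 := (hX (t - a)).comp a h2
    have h4 := h3.const_sub (X t)
    simpa using h4
  -- Key 1 : P's integral rewritten via integration by parts
  have key1 : ∀ t : ℝ, (∫ a in (0:ℝ)..A, x (t - a) * ∫ s in a..A, φ s)
      = ∫ s in (0:ℝ)..A, g s * (X t - X (t - s)) := by
    intro t
    have h1 : (∫ a in (0:ℝ)..A, x (t - a) * ∫ s in a..A, φ s)
        = ∫ a in (0:ℝ)..A, x (t - a) * (G A - G a) := by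
      apply integral_congr
      intro a ha
      rw [Set.uIcc_of_le hA.le] at ha
      beta_reduce
      congr 1
      have hφg : (∫ s in a..A, φ s) = ∫ s in a..A, g s := by
        apply integral_congr
        intro s hs
        rw [Set.uIcc_of_le ha.2] at hs
        exact (hgeq s ⟨le_trans ha.1 hs.1, hs.2⟩).symm
      rw [hφg, ← intervalIntegral.integral_interval_sub_left (hgint 0 A) (hgint 0 a)]
    rw [h1]
    -- integration by parts
    have hparts := intervalIntegral.integral_mul_deriv_eq_deriv_mul_of_hasDerivAt
      (a := (0:ℝ)) (b := A)
      (u := fun a => X t - X (t - a)) (u' := fun a => x (t - a))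
      (v := G) (v' := g)
      ((continuous_const.sub (hXc.comp (continuous_const.sub continuous_id))).continuousOn)
      hGc.continuousOn
      (fun a _ => hu' t a) (fun a _ => hG a)
      ((hxc.comp (continuous_const.sub continuous_id)).intervalIntegrable 0 A)
      (hgint 0 A)
    have e1 : (∫ a in (0:ℝ)..A, x (t - a) * (G A - G a))
        = (∫ a in (0:ℝ)..A, x (t - a)) * G A - ∫ a in (0:ℝ)..A, x (t - a) * G a := by
      have i1 : IntervalIntegrable (fun a => x (t - a) * G A) volume 0 A := by
        apply Continuous.intervalIntegrable; fun_prop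
      have i2 : IntervalIntegrable (fun a => x (t - a) * G a) volume 0 A := by
        apply Continuous.intervalIntegrable; fun_prop
      rw [← intervalIntegral.integral_mul_const, ← intervalIntegral.integral_sub i1 i2]
      apply integral_congr
      intro a _
      beta_reduce
      ring
    have e2 : (∫ s in (0:ℝ)..A, g s * (X t - X (t - s)))
        = ∫ s in (0:ℝ)..A, (X t - X (t - s)) * g s := by
      apply integral_congr; intro s _; ring
    have e3 : (∫ a in (0:ℝ)..A, x (t - a)) = X t - X (t - A) := by
      have := hshift t A
      simpa using this
    rw [e1, e2, e3]
    simp only [sub_zero, sub_self, hG0, zero_mul, mul_zero] at hparts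
    linarith [hparts]
  -- main computation for fixed t ≥ 0
  intro t ht
  rw [hP t, hP 0, key1 t, key1 0]
  have hzero : (∫ s in (0:ℝ)..A, g s * (X t - X (t - s)))
      - (∫ s in (0:ℝ)..A, g s * (X 0 - X (0 - s))) = 0 := by
    have hcont1 : Continuous fun s => g s * (X t - X (t - s)) :=
      hgc.mul (continuous_const.sub (hXc.comp (continuous_const.sub continuous_id)))
    have hcont0 : Continuous fun s => g s * (X 0 - X (0 - s)) :=
      hgc.mul (continuous_const.sub (hXc.comp (continuous_const.sub continuous_id)))
    rw [← intervalIntegral.integral_sub (hcont1.intervalIntegrable 0 A)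
      (hcont0.intervalIntegrable 0 A)]
    -- pointwise rewrite of difference as a double integral
    have hD : ∀ s : ℝ, g s * (X t - X (t - s)) - g s * (X 0 - X (0 - s))
        = ∫ w in (0:ℝ)..t, g s * (x w - x (w - s)) := by
      intro s
      have hsub : (∫ w in (0:ℝ)..t, x w - x (w - s))
          = X t - (X (t - s) - X (-s)) := by
        have i3 : IntervalIntegrable (fun w => x (w - s)) volume 0 t := by
          apply Continuous.intervalIntegrable; fun_prop
        rw [intervalIntegral.integral_sub (hxint 0 t) i3]
        congr 1
        rw [intervalIntegral.integral_comp_sub_right x s, zero_sub,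
          ← intervalIntegral.integral_interval_sub_left (hxint 0 (t - s)) (hxint 0 (-s))]
      rw [intervalIntegral.integral_const_mul, hsub, hX0, zero_sub]
      ring
    have hrw : (∫ s in (0:ℝ)..A, (g s * (X t - X (t - s)) - g s * (X 0 - X (0 - s))))
        = ∫ s in (0:ℝ)..A, ∫ w in (0:ℝ)..t, g s * (x w - x (w - s)) := by
      apply integral_congr
      intro s _
      exact hD s
    rw [hrw]
    -- Fubini
    have hswap : (∫ s in (0:ℝ)..A, ∫ w in (0:ℝ)..t, g s * (x w - x (w - s)))
        = ∫ w in (0:ℝ)..t, ∫ s in (0:ℝ)..A, g s * (x w - x (w - s)) := by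
      rw [intervalIntegral.integral_of_le hA.le, intervalIntegral.integral_of_le ht]
      simp_rw [intervalIntegral.integral_of_le ht, intervalIntegral.integral_of_le hA.le]
      apply MeasureTheory.integral_integral_swap
      rw [Measure.prod_restrict]
      have hFc : Continuous (Function.uncurry fun s w : ℝ => g s * (x w - x (w - s))) := by
        apply Continuous.mul
        · exact hgc.comp continuous_fst
        · exact (hxc.comp continuous_snd).sub
            (hxc.comp (continuous_snd.sub continuous_fst))
      have hKc : IsCompact (Set.Icc (0:ℝ) A ×ˢ Set.Icc (0:ℝ) t) :=
        isCompact_Icc.prod isCompact_Icc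
      have hint : IntegrableOn (Function.uncurry fun s w : ℝ => g s * (x w - x (w - s)))
          (Set.Icc (0:ℝ) A ×ˢ Set.Icc (0:ℝ) t) (volume.prod volume) := by
        rw [← Measure.volume_eq_prod]
        exact hFc.continuousOn.integrableOn_compact hKc
      exact hint.mono_set (Set.prod_mono Set.Ioc_subset_Icc_self Set.Ioc_subset_Icc_self)
    rw [hswap]
    -- the inner integral vanishes by the IDE
    have hinner : (∫ w in (0:ℝ)..t, ∫ s in (0:ℝ)..A, g s * (x w - x (w - s)))
        = ∫ w in (0:ℝ)..t, (0:ℝ) := by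
      apply integral_congr
      intro w hw
      rw [Set.uIcc_of_le ht] at hw
      have hsplit : (∫ s in (0:ℝ)..A, g s * (x w - x (w - s)))
          = (∫ s in (0:ℝ)..A, g s) * x w - ∫ s in (0:ℝ)..A, g s * x (w - s) := by
        have i4 : IntervalIntegrable (fun s => g s * x w) volume 0 A := by
          apply Continuous.intervalIntegrable; fun_prop
        have i5 : IntervalIntegrable (fun s => g s * x (w - s)) volume 0 A := by
          apply Continuous.intervalIntegrable; fun_prop
        rw [← intervalIntegral.integral_mul_const, ← intervalIntegral.integral_sub i4 i5]
        apply integral_congr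
        intro s _
        beta_reduce
        ring
      beta_reduce
      rw [hsplit, hmass', one_mul, ← hIDE' w hw.1, sub_self]
    rw [hinner, intervalIntegral.integral_zero]
  have := sub_eq_zero.mp hzero
  rw [this]
end

section
/- Suppose L > 0 and φ : [0,∞) → [0,∞) is continuous and satisfies limsup_{h→0+} h⁻¹(φ(t+h) - φ(t)) ≤ -L·φ(t)/(1 + √φ(t)) for all t ≥ 0. Then φ(t) ≤ φ(0)·exp(max(0, φ(0)-1))·exp(-(L/2)·t) for all t ≥ 0. -/
open Filter Set

lemma freq_of_limsup_le_neg {u : ℝ → ℝ} {l : Filter ℝ} [l.NeBot] {c r : ℝ}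
    (hc : Filter.limsup u l ≤ c) (hc0 : c < 0) (hcr : c < r) :
    ∃ᶠ x in l, u x < r := by
  by_contra h
  have hev : ∀ᶠ x in l, r ≤ u x := by
    simpa [Filter.not_frequently, not_lt] using h
  by_cases hb : Filter.IsBoundedUnder (· ≤ ·) l u
  · have := Filter.le_limsup_of_frequently_le hev.frequently hb
    linarith
  · have hemp : {a : ℝ | ∀ᶠ n in l, u n ≤ a} = ∅ := by
      ext a
      simp only [Set.mem_setOf_eq, Set.mem_empty_iff_false, iff_false]
      intro ha
      exact hb ⟨a, ha⟩
    have : Filter.limsup u l = 0 := by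
      rw [Filter.limsup_eq, hemp, Real.sInf_empty]
    linarith

lemma slope_transfer {φ : ℝ → ℝ} {x r : ℝ}
    (h : ∃ᶠ h in nhdsWithin 0 (Set.Ioi 0), h⁻¹ * (φ (x + h) - φ x) < r) :
    ∃ᶠ z in nhdsWithin x (Set.Ioi x), (z - x)⁻¹ * (φ z - φ x) < r := by
  have hmap : Filter.map (fun z => z - x) (nhdsWithin x (Set.Ioi x))
      = nhdsWithin 0 (Set.Ioi 0) := by
    have := (Homeomorph.subRight x).isEmbedding.map_nhdsWithin_eq (Set.Ioi x) x
    rw [show (fun z : ℝ => z - x) = ⇑(Homeomorph.subRight x) from rfl, this]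
    simp
  rw [← hmap] at h
  refine (Filter.frequently_map.mp h).mono fun z hz => ?_
  have hxz : x + (z - x) = z := by ring
  rwa [hxz] at hz

theorem stmt_13 (L : ℝ) (hL : 0 < L) (φ : ℝ → ℝ)
    (hcont : Continuous φ) (hnonneg : ∀ t, 0 ≤ φ t)
    (hdini : ∀ t ≥ 0, Filter.limsup (fun h : ℝ => h⁻¹ * (φ (t + h) - φ t))
      (nhdsWithin 0 (Set.Ioi 0)) ≤ -L * φ t / (1 + Real.sqrt (φ t))) :
    ∀ t ≥ 0, φ t ≤ φ 0 * Real.exp (max 0 (φ 0 - 1)) * Real.exp (-(L / 2) * t) := by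
  set M : ℝ := max 0 (φ 0 - 1) with hM
  set T : ℝ := 2 / L * M with hT
  have hM0 : 0 ≤ M := le_max_left _ _
  have hT0 : 0 ≤ T := by positivity
  have hLT : L / 2 * T = M := by rw [hT]; field_simp
  have hsq : ∀ x : ℝ, (0:ℝ) < 1 + Real.sqrt (φ x) := fun x => by positivity
  have hcneg : ∀ x, 0 < φ x → -L * φ x / (1 + Real.sqrt (φ x)) < 0 := by
    intro x hx
    apply div_neg_of_neg_of_pos _ (hsq x)
    nlinarith
  have hslope : ∀ x, 0 ≤ x → 0 < φ x → ∀ r, -L * φ x / (1 + Real.sqrt (φ x)) < r →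
      ∃ᶠ z in nhdsWithin x (Set.Ioi x), (z - x)⁻¹ * (φ z - φ x) < r := by
    intro x hx hφ r hr
    exact slope_transfer (freq_of_limsup_le_neg (hdini x hx) (hcneg x hφ) hr)
  -- φ is antitone on [0, ∞)
  have hanti : ∀ s, 0 ≤ s → ∀ t, s ≤ t → φ t ≤ φ s := by
    intro s hs t hst
    by_contra hcon
    push_neg at hcon
    set m : ℝ := (φ s + φ t) / 2 with hm
    have hφt0 : 0 < φ t := lt_of_le_of_lt (hnonneg s) hcon
    have hm0 : 0 < m := by rw [hm]; linarith [hnonneg s]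
    have hsm : φ s < m := by rw [hm]; linarith
    have hmt : m < φ t := by rw [hm]; linarith
    set S : Set ℝ := {u | u ∈ Set.Icc s t ∧ φ u ≤ m} with hS
    have hSne : S.Nonempty := ⟨s, ⟨le_rfl, hst⟩, hsm.le⟩
    have hSbdd : BddAbove S := ⟨t, fun u hu => hu.1.2⟩
    have hScl : IsClosed S := by
      have hSeq : S = Set.Icc s t ∩ φ ⁻¹' (Set.Iic m) := rfl
      rw [hSeq]
      exact isClosed_Icc.inter (isClosed_Iic.preimage hcont)
    set z : ℝ := sSup S with hz
    have hzS : z ∈ S := hScl.csSup_mem hSne hSbdd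
    have hsz : s ≤ z := le_csSup hSbdd ⟨⟨le_rfl, hst⟩, hsm.le⟩
    have hzt : z < t := by
      rcases eq_or_lt_of_le hzS.1.2 with h | h
      · exfalso; have h2 := hzS.2; rw [h] at h2; linarith
      · exact h
    have hgt : ∀ u, z < u → u ≤ t → m < φ u := by
      intro u hzu hut
      by_contra hc
      push_neg at hc
      have huS : u ∈ S := ⟨⟨le_trans hsz hzu.le, hut⟩, hc⟩
      exact absurd (le_csSup hSbdd huS) (not_le.mpr hzu)
    have hφz : φ z = m := by
      refine le_antisymm hzS.2 ?_
      by_contra hc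
      push_neg at hc
      have h1 : ∀ᶠ u in nhdsWithin z (Set.Ioi z), φ u < m :=
        ((hcont.continuousAt).eventually_lt continuousAt_const hc).filter_mono
          nhdsWithin_le_nhds
      have h2 : Set.Ioo z t ∈ nhdsWithin z (Set.Ioi z) :=
        Ioo_mem_nhdsGT_of_mem ⟨le_rfl, hzt⟩
      obtain ⟨u, hu1, hu2⟩ := (h1.and (Filter.eventually_of_mem h2 fun u hu => hu)).exists
      exact absurd hu1 (not_lt.mpr (hgt u hu2.1 hu2.2.le).le)
    have hge : ∀ x ∈ Set.Ico z t, m ≤ φ x := by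
      intro x hx
      rcases eq_or_lt_of_le hx.1 with h | h
      · rw [← h, hφz]
      · exact (hgt x h hx.2.le).le
    have hz0 : 0 ≤ z := le_trans hs hsz
    have key := le_gronwallBound_of_liminf_deriv_right_le
      (f := φ) (f' := fun x => -L * φ x / (1 + Real.sqrt (φ x)))
      (δ := m) (K := 0) (ε := 0) (a := z) (b := t)
      hcont.continuousOn
      (fun x hx r hr => hslope x (le_trans hz0 hx.1) (lt_of_lt_of_le hm0 (hge x hx)) r hr)
      (le_of_eq hφz)
      (fun x hx => by
        have h1 := hcneg x (lt_of_lt_of_le hm0 (hge x hx))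
        simp only [zero_mul, add_zero]
        linarith)
    have hfin := key t ⟨hzt.le, le_rfl⟩
    rw [gronwallBound_K0] at hfin
    simp only [zero_mul, add_zero] at hfin
    linarith
  -- φ T ≤ 1
  have hφT : φ T ≤ 1 := by
    rcases le_or_gt (φ 0) 1 with h | h
    · have hTz : T = 0 := by
        have hMz : M = 0 := max_eq_left (by linarith)
        rw [hT, hMz, mul_zero]
      rw [hTz]; exact h
    · by_contra hc
      push_neg at hc
      have hMeq : M = φ 0 - 1 := max_eq_right (by linarith)
      have hpos : ∀ x ∈ Set.Ico (0:ℝ) T, 1 < φ x := fun x hx =>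
        lt_of_lt_of_le hc (hanti x hx.1 T hx.2.le)
      have hbound : ∀ x ∈ Set.Ico (0:ℝ) T, -L * φ x / (1 + Real.sqrt (φ x)) ≤ -(L/2) := by
        intro x hx
        have h1 := hpos x hx
        have hs0 := Real.sqrt_nonneg (φ x)
        have hs2 : Real.sqrt (φ x) ^ 2 = φ x := Real.sq_sqrt (hnonneg x)
        have hs1 : 1 ≤ Real.sqrt (φ x) := by nlinarith [hs0, hs2, h1]
        have hint1 : 0 ≤ L * ((2 * Real.sqrt (φ x) + 1) * (Real.sqrt (φ x) - 1)) :=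
          mul_nonneg hL.le (mul_nonneg (by linarith) (by linarith))
        have hint2 : L * Real.sqrt (φ x) ^ 2 = L * φ x := by rw [hs2]
        rw [div_le_iff₀ (hsq x)]
        nlinarith [hint1, hint2]
      have key := le_gronwallBound_of_liminf_deriv_right_le
        (f := φ) (f' := fun _ => -(L/2)) (δ := φ 0) (K := 0) (ε := -(L/2)) (a := 0) (b := T)
        hcont.continuousOn
        (fun x hx r hr => hslope x hx.1 (by linarith [hpos x hx]) r
          (lt_of_le_of_lt (hbound x hx) hr))
        le_rfl
        (fun x hx => by simp)
      have hend := key T ⟨hT0, le_rfl⟩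
      rw [gronwallBound_K0] at hend
      simp only [sub_zero] at hend
      have hTM : L / 2 * T = φ 0 - 1 := by rw [hLT, hMeq]
      linarith
  intro t ht
  rcases le_or_gt t T with hle | hlt
  · -- t ≤ T
    have h1 : φ t ≤ φ 0 := hanti 0 le_rfl t ht
    have h2 : (1:ℝ) ≤ Real.exp M * Real.exp (-(L/2)*t) := by
      rw [← Real.exp_add]
      apply Real.one_le_exp
      have h3 : L / 2 * t ≤ L / 2 * T := mul_le_mul_of_nonneg_left hle (by positivity)
      linarith
    calc φ t ≤ φ 0 := h1
      _ ≤ φ 0 * (Real.exp M * Real.exp (-(L/2)*t)) := le_mul_of_one_le_right (hnonneg 0) h2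
      _ = φ 0 * Real.exp M * Real.exp (-(L/2)*t) := by ring
  · -- T < t
    rcases eq_or_lt_of_le (hnonneg t) with h0 | h0
    · rw [← h0]
      exact mul_nonneg (mul_nonneg (hnonneg 0) (Real.exp_nonneg _)) (Real.exp_nonneg _)
    · have hposIco : ∀ x ∈ Set.Ico T t, 0 < φ x := fun x hx =>
        lt_of_lt_of_le h0 (hanti x (le_trans hT0 hx.1) t hx.2.le)
      have hle1 : ∀ x ∈ Set.Ico T t, φ x ≤ 1 := fun x hx =>
        le_trans (hanti T hT0 x hx.1) hφT
      have hbound : ∀ x ∈ Set.Ico T t,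
          -L * φ x / (1 + Real.sqrt (φ x)) ≤ -(L/2) * φ x := by
        intro x hx
        have h1 := hle1 x hx
        have h2 := hnonneg x
        have hs0 := Real.sqrt_nonneg (φ x)
        have hs1 : Real.sqrt (φ x) ≤ 1 := by
          rw [show (1:ℝ) = Real.sqrt 1 by simp]
          exact Real.sqrt_le_sqrt h1
        rw [div_le_iff₀ (hsq x)]
        nlinarith [mul_nonneg (mul_nonneg hL.le h2) (by linarith : (0:ℝ) ≤ 1 - Real.sqrt (φ x))]
      have key := le_gronwallBound_of_liminf_deriv_right_le
        (f := φ) (f' := fun x => -(L/2) * φ x) (δ := φ T) (K := -(L/2)) (ε := 0)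
        (a := T) (b := t)
        hcont.continuousOn
        (fun x hx r hr => hslope x (le_trans hT0 hx.1) (hposIco x hx) r
          (lt_of_le_of_lt (hbound x hx) hr))
        le_rfl
        (fun x hx => by simp)
      have hend := key t ⟨hlt.le, le_rfl⟩
      rw [gronwallBound_ε0] at hend
      have hexp : -(L/2) * (t - T) = M + -(L/2) * t := by rw [← hLT]; ring
      rw [hexp, Real.exp_add] at hend
      have hφT0 : φ T ≤ φ 0 := hanti 0 le_rfl T hT0
      calc φ t ≤ φ T * (Real.exp M * Real.exp (-(L/2)*t)) := hend
        _ = φ T * Real.exp M * Real.exp (-(L/2)*t) := by ring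
        _ ≤ φ 0 * Real.exp M * Real.exp (-(L/2)*t) := by
            apply mul_le_mul_of_nonneg_right
              (mul_le_mul_of_nonneg_right hφT0 (Real.exp_nonneg _)) (Real.exp_nonneg _)
end

section
/- Let A, σ, ε, K̃ > 0 and let x : [-A,∞) → ℝ be continuous, and suppose there exists constant P★ ∈ ℝ such that ∫₀^A |x(t-a) - P★| da ≤ K̃ exp(-εt) ∫₀^A |x(-a)| da for all t ≥ 0, and x(t) = ∫₀^A φ(a)x(t-a) da for all t ≥ 0 with φ : [0,A] → [0,∞) continuous and ∫₀^A φ(a) da = 1. Then there exists M > 0 such that max_{-A ≤ θ ≤ 0} |x(t+θ) - P★| ≤ M exp(-εt) max_{-A ≤ a ≤ 0} |x(-a)| for all t ≥ 0. -/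
open MeasureTheory intervalIntegral

theorem stmt_18 (A σ ε Ktil : ℝ) (hA : 0 < A) (hσ : 0 < σ) (hε : 0 < ε)
    (hK : 0 < Ktil) (x φ : ℝ → ℝ) (Pstar : ℝ)
    (hxc : Continuous x)
    (hφc : ContinuousOn φ (Set.Icc 0 A)) (hφ0 : ∀ a ∈ Set.Icc 0 A, 0 ≤ φ a)
    (hmass : (∫ a in (0:ℝ)..A, φ a) = 1)
    (hL1 : ∀ t ≥ 0, (∫ a in (0:ℝ)..A, |x (t - a) - Pstar|) ≤
      Ktil * Real.exp (-ε * t) * ∫ a in (0:ℝ)..A, |x (-a)|)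
    (hIDE : ∀ t ≥ 0, x t = ∫ a in (0:ℝ)..A, φ a * x (t - a)) :
    ∃ M > 0, ∀ t ≥ 0, ∀ θ ∈ Set.Icc (-A) (0:ℝ),
      |x (t + θ) - Pstar| ≤
        M * Real.exp (-ε * t) * ⨆ a : Set.Icc (-A) (0:ℝ), |x a| := by
  have huIcc : Set.uIcc (0:ℝ) A = Set.Icc 0 A := Set.uIcc_of_le hA.le
  set S := ⨆ a : Set.Icc (-A) (0:ℝ), |x a| with hSdef
  have hbdd : BddAbove (Set.range fun a : Set.Icc (-A) (0:ℝ) => |x a|) := by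
    obtain ⟨C, hC⟩ := ((isCompact_Icc (a := -A) (b := (0:ℝ))).image_of_continuousOn
      (hxc.abs.continuousOn)).bddAbove
    refine ⟨C, ?_⟩
    rintro y ⟨a, rfl⟩
    exact hC (Set.mem_image_of_mem _ a.2)
  have hSle : ∀ s ∈ Set.Icc (-A) (0:ℝ), |x s| ≤ S := fun s hs => le_ciSup hbdd ⟨s, hs⟩
  have hS0 : 0 ≤ S := le_trans (abs_nonneg _) (hSle 0 ⟨by linarith, le_refl 0⟩)
  -- integrability facts
  have hφInt : IntervalIntegrable φ volume 0 A := (huIcc ▸ hφc).intervalIntegrable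
  have hxInt0 : IntervalIntegrable (fun a : ℝ => |x (-a)|) volume 0 A :=
    ((hxc.comp continuous_neg).abs).intervalIntegrable _ _
  have habsInt : ∀ t : ℝ, IntervalIntegrable (fun a => |x (t - a) - Pstar|) volume 0 A :=
    fun t => (((hxc.comp (continuous_const.sub continuous_id)).sub
      continuous_const).abs).intervalIntegrable _ _
  -- ∫ |x(-a)| ≤ A * S
  have hint0 : (∫ a in (0:ℝ)..A, |x (-a)|) ≤ A * S := by
    have := intervalIntegral.integral_mono_on hA.le hxInt0 intervalIntegrable_const
      (fun a ha => hSle (-a) ⟨by linarith [ha.2], by linarith [ha.1]⟩)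
    simpa using this
  -- maximum of φ
  obtain ⟨a0, ha0, hCφ⟩ := isCompact_Icc.exists_isMaxOn ⟨0, le_refl 0, hA.le⟩ hφc
  set Cφ := φ a0 with hCdef
  have hCφ0 : 0 ≤ Cφ := hφ0 a0 ha0
  -- key pointwise bound for s ≥ 0
  have key : ∀ s : ℝ, 0 ≤ s →
      |x s - Pstar| ≤ Cφ * Ktil * A * (Real.exp (-ε * s) * S) := by
    intro s hs
    have hxcont : ContinuousOn (fun a => x (s - a)) (Set.uIcc (0:ℝ) A) :=
      (hxc.comp (continuous_const.sub continuous_id)).continuousOn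
    have hrep : x s - Pstar = ∫ a in (0:ℝ)..A, φ a * (x (s - a) - Pstar) := by
      have e1 : (fun a => φ a * (x (s - a) - Pstar))
          = fun a => φ a * x (s - a) - φ a * Pstar := by
        funext a; ring
      rw [e1, intervalIntegral.integral_sub (hφInt.mul_continuousOn hxcont)
        (hφInt.mul_const _), intervalIntegral.integral_mul_const, hmass, one_mul,
        ← hIDE s hs]
    have hInt1 : IntervalIntegrable (fun a => |φ a * (x (s - a) - Pstar)|) volume 0 A :=
      (hφInt.mul_continuousOn (((hxc.comp (continuous_const.sub
        continuous_id)).sub continuous_const).continuousOn)).abs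
    have hInt2 : IntervalIntegrable (fun a => Cφ * |x (s - a) - Pstar|) volume 0 A :=
      (habsInt s).const_mul Cφ
    calc |x s - Pstar| = |∫ a in (0:ℝ)..A, φ a * (x (s - a) - Pstar)| := by rw [hrep]
      _ ≤ ∫ a in (0:ℝ)..A, |φ a * (x (s - a) - Pstar)| :=
          intervalIntegral.abs_integral_le_integral_abs hA.le
      _ ≤ ∫ a in (0:ℝ)..A, Cφ * |x (s - a) - Pstar| := by
          apply intervalIntegral.integral_mono_on hA.le hInt1 hInt2
          intro a ha
          rw [abs_mul, abs_of_nonneg (hφ0 a ha)]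
          exact mul_le_mul_of_nonneg_right (hCφ ha) (abs_nonneg _)
      _ = Cφ * ∫ a in (0:ℝ)..A, |x (s - a) - Pstar| := by
          rw [intervalIntegral.integral_const_mul]
      _ ≤ Cφ * (Ktil * Real.exp (-ε * s) * ∫ a in (0:ℝ)..A, |x (-a)|) :=
          mul_le_mul_of_nonneg_left (hL1 s hs) hCφ0
      _ ≤ Cφ * Ktil * A * (Real.exp (-ε * s) * S) := by
          have hE := (Real.exp_pos (-ε * s)).le
          nlinarith [mul_le_mul_of_nonneg_left hint0
            (mul_nonneg (mul_nonneg hCφ0 hK.le) hE)]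
  -- bound on |Pstar|
  have hP : |Pstar| ≤ (Ktil + 1) * S := by
    have h0 := hL1 0 le_rfl
    have e0 : (fun a : ℝ => |x (0 - a) - Pstar|) = fun a => |x (-a) - Pstar| := by
      funext a; rw [zero_sub]
    rw [e0] at h0
    simp only [mul_zero, neg_zero, Real.exp_zero, mul_one] at h0
    have hInt3 : IntervalIntegrable (fun a : ℝ => x (-a)) volume 0 A :=
      (hxc.comp continuous_neg).intervalIntegrable _ _
    have e2 : (∫ a in (0:ℝ)..A, (x (-a) - Pstar))
        = (∫ a in (0:ℝ)..A, x (-a)) - A * Pstar := by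
      rw [intervalIntegral.integral_sub hInt3 intervalIntegrable_const,
        intervalIntegral.integral_const]
      simp [smul_eq_mul]
    have h3 : |∫ a in (0:ℝ)..A, (x (-a) - Pstar)| ≤ ∫ a in (0:ℝ)..A, |x (-a) - Pstar| :=
      intervalIntegral.abs_integral_le_integral_abs hA.le
    have h4 : |∫ a in (0:ℝ)..A, x (-a)| ≤ ∫ a in (0:ℝ)..A, |x (-a)| :=
      intervalIntegral.abs_integral_le_integral_abs hA.le
    have h5 : |A * Pstar| ≤ A * S + Ktil * (A * S) := by
      have e3 : A * Pstar = (∫ a in (0:ℝ)..A, x (-a))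
          - (∫ a in (0:ℝ)..A, (x (-a) - Pstar)) := by rw [e2]; ring
      rw [e3]
      calc |(∫ a in (0:ℝ)..A, x (-a)) - (∫ a in (0:ℝ)..A, (x (-a) - Pstar))|
          ≤ |∫ a in (0:ℝ)..A, x (-a)| + |∫ a in (0:ℝ)..A, (x (-a) - Pstar)| :=
            abs_sub _ _
        _ ≤ A * S + Ktil * (A * S) := by
            have := h3.trans h0
            nlinarith [mul_le_mul_of_nonneg_left hint0 hK.le, h4.trans hint0]
    rw [abs_mul, abs_of_pos hA] at h5
    nlinarith
  -- assemble
  refine ⟨Real.exp (ε * A) * (Cφ * Ktil * A + (Ktil + 2)), by positivity, ?_⟩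
  intro t ht θ hθ
  have hE1 := Real.exp_pos (ε * A)
  have hE2 := Real.exp_pos (-ε * t)
  by_cases hcase : 0 ≤ t + θ
  · have h1 := key (t + θ) hcase
    have hexp : Real.exp (-ε * (t + θ)) ≤ Real.exp (ε * A) * Real.exp (-ε * t) := by
      rw [← Real.exp_add]
      apply Real.exp_le_exp.mpr
      nlinarith [hθ.1, hθ.2]
    calc |x (t + θ) - Pstar| ≤ Cφ * Ktil * A * (Real.exp (-ε * (t + θ)) * S) := h1
      _ ≤ Cφ * Ktil * A * ((Real.exp (ε * A) * Real.exp (-ε * t)) * S) := by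
          apply mul_le_mul_of_nonneg_left (mul_le_mul_of_nonneg_right hexp hS0)
          positivity
      _ ≤ Real.exp (ε * A) * (Cφ * Ktil * A + (Ktil + 2)) * Real.exp (-ε * t) * S := by
          nlinarith [mul_nonneg (mul_nonneg hE1.le hE2.le) hS0, hK.le]
  · push_neg at hcase
    have htA : t ≤ A := by nlinarith [hθ.1]
    have hmem : t + θ ∈ Set.Icc (-A) (0:ℝ) := ⟨by linarith [hθ.1], hcase.le⟩
    have h1 : |x (t + θ) - Pstar| ≤ (Ktil + 2) * S := by
      calc |x (t + θ) - Pstar| ≤ |x (t + θ)| + |Pstar| := abs_sub _ _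
        _ ≤ S + (Ktil + 1) * S := add_le_add (hSle _ hmem) hP
        _ = (Ktil + 2) * S := by ring
    have hexp1 : 1 ≤ Real.exp (ε * A) * Real.exp (-ε * t) := by
      rw [← Real.exp_add]
      apply Real.one_le_exp
      nlinarith
    calc |x (t + θ) - Pstar| ≤ (Ktil + 2) * S := h1
      _ ≤ (Ktil + 2) * S * (Real.exp (ε * A) * Real.exp (-ε * t)) :=
          le_mul_of_one_le_right (mul_nonneg (by linarith) hS0) hexp1
      _ ≤ Real.exp (ε * A) * (Cφ * Ktil * A + (Ktil + 2)) * Real.exp (-ε * t) * S := by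
          nlinarith [mul_nonneg (mul_nonneg (mul_nonneg hE1.le hE2.le) hS0)
            (mul_nonneg (mul_nonneg hCφ0 hK.le) hA.le)]
end

section
/- Let D_min < D* < D_max, T > 0, and define sat(x) := min(D_max, max(D_min, x)). Consider a sequence defined by sampled-data dynamics: η((i+1)T) = η(iT) - (D_i - D*)T where D_i = sat(D* + T⁻¹η(iT) + T⁻¹v(iT)). Then for all integers i ≥ 0: min(0, η(0) + i(D* - D_min)T) + min_{k=0..i} min(0, -v(kT)) ≤ η(iT) ≤ max(0, η(0) - i(D_max - D*)T) + max_{k=0..i} max(0, -v(kT)). -/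
/-! Because `T > 0`, the map `D ↦ (D - D*) T` commutes with the saturation, so one step reads
`η (i+1) = η i - clamp (η i + v i)` with clamp bounds `-(D* - Dmin) T` and `(Dmax - D*) T`.
Hence either the lower clamp is active and `η` grows by `(D* - Dmin) T`, or
`η (i+1) ≥ -v i`; symmetrically either `η` drops by `(Dmax - D*) T` or `η (i+1) ≤ -v i`.
Induction on `i` turns these one-step bounds into the envelopes of the theorem. -/

open Finset

theorem le_max_add_sup'_of_le_max_add {α : Type*} [AddCommGroup α] [LinearOrder α]
    [IsOrderedAddMonoid α] {x w : ℕ → α} {c : α} (hc : c ≤ 0)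
    (hstep : ∀ i, x (i + 1) ≤ max (x i + c) (w i)) (i : ℕ) :
    x i ≤ max 0 (x 0 + i • c) +
      (range (i + 1)).sup' nonempty_range_add_one (fun k => max 0 (w k)) := by
  induction i with
  | zero =>
    simpa using add_le_add (le_max_right 0 (x 0)) (le_max_left 0 (w 0))
  | succ i ih =>
    set S := fun n : ℕ => (range (n + 1)).sup' nonempty_range_add_one (fun k => max 0 (w k))
    have hS : S i ≤ S (i + 1) :=
      sup'_mono _ (range_subset_range.mpr (Nat.le_succ _)) nonempty_range_add_one
    have hw : max 0 (w i) ≤ S (i + 1) := le_sup' (fun k => max 0 (w k)) (by simp)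
    refine (hstep i).trans (max_le ?_ ?_)
    · calc x i + c ≤ max 0 (x 0 + i • c) + S i + c := add_le_add_left ih c
        _ = max c (x 0 + (i + 1) • c) + S i := by
          rw [add_right_comm, ← max_add_add_right, zero_add, succ_nsmul, add_assoc]
        _ ≤ max 0 (x 0 + (i + 1) • c) + S (i + 1) := add_le_add (max_le_max_right _ hc) hS
    · exact (le_max_right _ _).trans (hw.trans (le_add_of_nonneg_left (le_max_left _ _)))

theorem min_add_inf'_le_of_min_add_le {α : Type*} [AddCommGroup α] [LinearOrder α]
    [IsOrderedAddMonoid α] {x w : ℕ → α} {a : α} (ha : 0 ≤ a)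
    (hstep : ∀ i, min (x i + a) (w i) ≤ x (i + 1)) (i : ℕ) :
    min 0 (x 0 + i • a) +
      (range (i + 1)).inf' nonempty_range_add_one (fun k => min 0 (w k)) ≤ x i :=
  @le_max_add_sup'_of_le_max_add αᵒᵈ _ _ OrderDual.isOrderedAddMonoid _ _ _ ha hstep i

theorem min_le_sub_sat {Dmin Dstar Dmax T : ℝ} (hT : 0 < T) (x v : ℝ) :
    min (x + (Dstar - Dmin) * T) (-v) ≤
      x - (min Dmax (max Dmin (Dstar + T⁻¹ * x + T⁻¹ * v)) - Dstar) * T := by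
  have hxv : (Dstar + T⁻¹ * x + T⁻¹ * v - Dstar) * T = x + v := by field_simp; ring
  calc min (x + (Dstar - Dmin) * T) (-v)
      = x - max ((Dmin - Dstar) * T) ((Dstar + T⁻¹ * x + T⁻¹ * v - Dstar) * T) := by
        rw [hxv, ← min_sub_sub_left]; ring_nf
    _ = x - (max Dmin (Dstar + T⁻¹ * x + T⁻¹ * v) - Dstar) * T := by
        rw [← max_mul_of_nonneg _ _ hT.le, max_sub_sub_right]
    _ ≤ x - (min Dmax (max Dmin (Dstar + T⁻¹ * x + T⁻¹ * v)) - Dstar) * T := by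
        gcongr; exact min_le_right _ _

theorem sub_sat_le_max {Dmin Dstar Dmax T : ℝ} (hT : 0 < T) (x v : ℝ) :
    x - (min Dmax (max Dmin (Dstar + T⁻¹ * x + T⁻¹ * v)) - Dstar) * T ≤
      max (x - (Dmax - Dstar) * T) (-v) := by
  have hxv : (Dstar + T⁻¹ * x + T⁻¹ * v - Dstar) * T = x + v := by field_simp; ring
  calc x - (min Dmax (max Dmin (Dstar + T⁻¹ * x + T⁻¹ * v)) - Dstar) * T
      ≤ x - (min Dmax (Dstar + T⁻¹ * x + T⁻¹ * v) - Dstar) * T := by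
        gcongr; exact le_max_right _ _
    _ = x - min ((Dmax - Dstar) * T) ((Dstar + T⁻¹ * x + T⁻¹ * v - Dstar) * T) := by
        rw [← min_mul_of_nonneg _ _ hT.le, min_sub_sub_right]
    _ = max (x - (Dmax - Dstar) * T) (-v) := by
        rw [hxv, ← max_sub_sub_left]; ring_nf

theorem stmt_19 (Dmin Dstar Dmax T : ℝ)
    (h1 : Dmin < Dstar) (h2 : Dstar < Dmax) (hT : 0 < T)
    (sat : ℝ → ℝ) (hsat : ∀ x, sat x = min Dmax (max Dmin x))
    (η v D : ℕ → ℝ)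
    (hD : ∀ i, D i = sat (Dstar + T⁻¹ * η i + T⁻¹ * v i))
    (hrec : ∀ i, η (i + 1) = η i - (D i - Dstar) * T) :
    ∀ i : ℕ,
      min 0 (η 0 + i * (Dstar - Dmin) * T) +
        (Finset.range (i + 1)).inf' Finset.nonempty_range_add_one
          (fun k => min 0 (-(v k))) ≤ η i ∧
      η i ≤ max 0 (η 0 - i * (Dmax - Dstar) * T) +
        (Finset.range (i + 1)).sup' Finset.nonempty_range_add_one
          (fun k => max 0 (-(v k))) := by
  have hstep_lower : ∀ i, min (η i + (Dstar - Dmin) * T) (-v i) ≤ η (i + 1) := fun i => by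
    rw [hrec, hD, hsat]
    exact min_le_sub_sat hT _ _
  have hstep_upper : ∀ i, η (i + 1) ≤ max (η i + -((Dmax - Dstar) * T)) (-v i) := fun i => by
    rw [hrec, hD, hsat, ← sub_eq_add_neg]
    exact sub_sat_le_max hT _ _
  intro i
  constructor
  · simpa only [nsmul_eq_mul, mul_assoc] using
      min_add_inf'_le_of_min_add_le (mul_nonneg (sub_nonneg.mpr h1.le) hT.le) hstep_lower i
  · simpa only [nsmul_eq_mul, mul_neg, ← sub_eq_add_neg, mul_assoc] using
      le_max_add_sup'_of_le_max_add
        (neg_nonpos.mpr (mul_nonneg (sub_nonneg.mpr h2.le) hT.le)) hstep_upper i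
end
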